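/- arXiv:1604.00145 — 2 statements merged into one kernel-verified Lean document; each statement's English description precedes it below -/
import Mathlib

section
/- Let Λ be a non-coherence-generating qubit channel (a channel on 2×2 density matrices mapping every diagonal density matrix to a diagonal matrix). Then for every 2×2 density matrix ρ₂, the l₁-norm of coherence satisfies C_{l1}(Λ(ρ₂)) ≤ C_{l1}(ρ₂). -/
open Matrix BigOperators Kronecker ComplexOrder

/-- Base-2 Shannon entropy of a probability vector, with the convention `0 · log 0 = 0`
(automatic since `Real.logb 2 0 = 0`). -/
noncomputable def shannon2 {n : Type*} [Fintype n] (p : n → ℝ) : ℝ :=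
  -∑ i, p i * Real.logb 2 (p i)

/-- A density matrix: positive semidefinite with unit trace. -/
def IsDensityMatrix {n : Type*} [Fintype n] (ρ : Matrix n n ℂ) : Prop :=
  ρ.PosSemidef ∧ ρ.trace = 1

/-- Von Neumann entropy (base 2): Shannon entropy of the eigenvalues. -/
noncomputable def vN {n : Type*} [Fintype n] [DecidableEq n] (ρ : Matrix n n ℂ) : ℝ :=
  if h : ρ.IsHermitian then shannon2 h.eigenvalues else 0

/-- Relative entropy of coherence `C_r(ρ) = S(Δ(ρ)) - S(ρ)`, where `Δ` is the
diagonal part. -/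
noncomputable def Cr {n : Type*} [Fintype n] [DecidableEq n] (ρ : Matrix n n ℂ) : ℝ :=
  vN (Matrix.diagonal ρ.diag) - vN ρ

/-- Application of a channel given by its Kraus operators: `ρ ↦ ∑ i, K i * ρ * (K i)ᴴ`. -/
noncomputable def krausApply {ι m p : Type*} [Fintype ι] [Fintype m] [Fintype p]
    (K : ι → Matrix p m ℂ) (ρ : Matrix m m ℂ) : Matrix p p ℂ :=
  ∑ i, K i * ρ * (K i)ᴴ

/-- Coherence of formation: infimum over finite pure-state decompositions
`ρ = ∑ i, p i • |ψ i⟩⟨ψ i|` of `∑ i, p i * S(Δ(|ψ i⟩⟨ψ i|))`. -/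
noncomputable def Cf {n : Type*} [Fintype n] (ρ : Matrix n n ℂ) : ℝ :=
  sInf { x : ℝ | ∃ (m : ℕ) (p : Fin m → ℝ) (ψ : Fin m → n → ℂ),
    (∀ i, 0 < p i) ∧ (∑ i, p i = 1) ∧ (∀ i, ∑ j, ‖ψ i j‖ ^ 2 = 1) ∧
    ρ = ∑ i, (p i : ℂ) • Matrix.vecMulVec (ψ i) (star (ψ i)) ∧
    x = ∑ i, p i * shannon2 (fun j => ‖ψ i j‖ ^ 2) }

/-- l₁-norm of coherence: sum of the absolute values of the off-diagonal entries. -/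
noncomputable def Cl1 {n : Type*} [Fintype n] [DecidableEq n] (ρ : Matrix n n ℂ) : ℝ :=
  ∑ i, ∑ j, if i ≠ j then ‖ρ i j‖ else 0

/-!
Applying the non-coherence-generating condition to the incoherent states `|c⟩⟨c|` kills the
cross terms `∑ᵢ Kᵢ a c · conj (Kᵢ b c)` with `a ≠ b`, so each off-diagonal output entry is a
combination of `ρ₀₁` and `ρ₁₀` alone, with coefficients of modulus at most
`S = ∑ᵢ |Kᵢ₀₀| |Kᵢ₁₁|` and `T = ∑ᵢ |Kᵢ₀₁| |Kᵢ₁₀|`. Hence `C_{l1}(Λ ρ) ≤ (S + T) C_{l1}(ρ)`, and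
`S + T ≤ 1` by AM–GM, since trace preservation makes every column of the stacked Kraus
operators a unit vector.
-/

section Kraus

variable {ι m p : Type*} [Fintype ι] [Fintype p]

theorem krausApply_apply [Fintype m] (K : ι → Matrix p m ℂ) (ρ : Matrix m m ℂ) (a b : p) :
    krausApply K ρ a b = ∑ c, ∑ d, ρ c d * ∑ i, K i a c * star (K i b d) := by
  simp only [krausApply, Matrix.sum_apply, Matrix.mul_apply, Matrix.conjTranspose_apply,
    Finset.sum_mul, Finset.mul_sum]
  rw [Finset.sum_comm]
  conv_lhs => enter [2, d]; rw [Finset.sum_comm]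
  rw [Finset.sum_comm]
  exact Finset.sum_congr rfl fun c _ => Finset.sum_congr rfl fun d _ =>
    Finset.sum_congr rfl fun i _ => by ring

theorem sum_norm_sq_eq_one_of_kraus [DecidableEq m] {K : ι → Matrix p m ℂ}
    (hKraus : ∑ i, (K i)ᴴ * K i = 1) (b : m) : ∑ i, ∑ a, ‖K i a b‖ ^ 2 = 1 := by
  have h := congrArg Complex.re (congrFun (congrFun hKraus b) b)
  simpa only [Matrix.sum_apply, Matrix.mul_apply, Matrix.conjTranspose_apply,
    Matrix.one_apply_eq, Complex.re_sum, Complex.star_def, Complex.conj_mul', ← Complex.ofReal_pow,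
    Complex.ofReal_re, Complex.one_re] using h

end Kraus

section NonCoherenceGenerating

variable {ι n : Type*} [Fintype ι] [Fintype n] [DecidableEq n]

theorem isDensityMatrix_diagonal_single (c : n) :
    IsDensityMatrix (diagonal (Pi.single c 1 : n → ℂ)) := by
  refine ⟨Matrix.PosSemidef.diagonal fun j => ?_, by simp [Matrix.trace_diagonal]⟩
  rcases eq_or_ne j c with rfl | hj <;> simp [*]

theorem krausApply_diagonal_single_apply (K : ι → Matrix n n ℂ) (c a b : n) :
    krausApply K (diagonal (Pi.single c 1)) a b = ∑ i, K i a c * star (K i b c) := by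
  simp [krausApply_apply, Matrix.diagonal_apply, Pi.single_apply]

theorem sum_mul_star_eq_zero_of_nonCoherenceGenerating {K : ι → Matrix n n ℂ}
    (hNC : ∀ σ : Matrix n n ℂ, IsDensityMatrix σ → σ.IsDiag → (krausApply K σ).IsDiag)
    (c : n) {a b : n} (hab : a ≠ b) : ∑ i, K i a c * star (K i b c) = 0 := by
  rw [← krausApply_diagonal_single_apply]
  exact hNC _ (isDensityMatrix_diagonal_single c) (isDiag_diagonal _) hab

end NonCoherenceGenerating

section Qubit

variable {ι : Type*} [Fintype ι]

theorem Cl1_fin_two (ρ : Matrix (Fin 2) (Fin 2) ℂ) : Cl1 ρ = ‖ρ 0 1‖ + ‖ρ 1 0‖ := by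
  simp [Cl1, Fin.sum_univ_two]

theorem norm_krausApply_apply_le {K : ι → Matrix (Fin 2) (Fin 2) ℂ}
    (hNC : ∀ c : Fin 2, ∀ {a b : Fin 2}, a ≠ b → ∑ i, K i a c * star (K i b c) = 0)
    (ρ : Matrix (Fin 2) (Fin 2) ℂ) {a b : Fin 2} (hab : a ≠ b) :
    ‖krausApply K ρ a b‖ ≤ ‖ρ 0 1‖ * ∑ i, ‖K i a 0‖ * ‖K i b 1‖
      + ‖ρ 1 0‖ * ∑ i, ‖K i a 1‖ * ‖K i b 0‖ := by
  have hsum (c d : Fin 2) : ‖∑ i, K i a c * star (K i b d)‖ ≤ ∑ i, ‖K i a c‖ * ‖K i b d‖ :=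
    (norm_sum_le _ _).trans_eq (by simp)
  rw [krausApply_apply]
  simp only [Fin.sum_univ_two, hNC 0 hab, hNC 1 hab, mul_zero, zero_add, add_zero]
  refine (norm_add_le _ _).trans ?_
  rw [norm_mul, norm_mul]
  gcongr
  exacts [hsum 0 1, hsum 1 0]

theorem sum_norm_mul_add_norm_mul_le_one {K : ι → Matrix (Fin 2) (Fin 2) ℂ}
    (hKraus : ∑ i, (K i)ᴴ * K i = 1) :
    ∑ i, (‖K i 0 0‖ * ‖K i 1 1‖ + ‖K i 0 1‖ * ‖K i 1 0‖) ≤ 1 := by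
  have hcol := sum_norm_sq_eq_one_of_kraus hKraus
  calc ∑ i, (‖K i 0 0‖ * ‖K i 1 1‖ + ‖K i 0 1‖ * ‖K i 1 0‖)
      ≤ ∑ i, ((‖K i 0 0‖ ^ 2 + ‖K i 1 0‖ ^ 2) + (‖K i 0 1‖ ^ 2 + ‖K i 1 1‖ ^ 2)) / 2 := by
        gcongr with i
        nlinarith [two_mul_le_add_sq ‖K i 0 0‖ ‖K i 1 1‖, two_mul_le_add_sq ‖K i 0 1‖ ‖K i 1 0‖]
    _ = 1 := by
        have h0 := hcol 0
        have h1 := hcol 1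
        simp only [Fin.sum_univ_two] at h0 h1
        rw [← Finset.sum_div, Finset.sum_add_distrib, h0, h1]
        norm_num

end Qubit

theorem Cl1_monotone_under_qubit_NC_general (N : ℕ)
    (K : Fin N → Matrix (Fin 2) (Fin 2) ℂ)
    (hKraus : ∑ i, (K i)ᴴ * K i = 1)
    (hNC : ∀ σ : Matrix (Fin 2) (Fin 2) ℂ,
      IsDensityMatrix σ → σ.IsDiag → (krausApply K σ).IsDiag)
    (ρ : Matrix (Fin 2) (Fin 2) ℂ) :
    Cl1 (krausApply K ρ) ≤ Cl1 ρ := by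
  have hcross := sum_mul_star_eq_zero_of_nonCoherenceGenerating hNC
  set S := ∑ i, ‖K i 0 0‖ * ‖K i 1 1‖
  set T := ∑ i, ‖K i 0 1‖ * ‖K i 1 0‖
  have h01 : ‖krausApply K ρ 0 1‖ ≤ ‖ρ 0 1‖ * S + ‖ρ 1 0‖ * T :=
    norm_krausApply_apply_le hcross ρ zero_ne_one
  have h10 : ‖krausApply K ρ 1 0‖ ≤ ‖ρ 0 1‖ * T + ‖ρ 1 0‖ * S := by
    simpa only [mul_comm ‖K _ 1 _‖] using norm_krausApply_apply_le hcross ρ one_ne_zero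
  have hST : S + T ≤ 1 := by
    simpa only [S, T, Finset.sum_add_distrib] using sum_norm_mul_add_norm_mul_le_one hKraus
  rw [Cl1_fin_two, Cl1_fin_two]
  nlinarith [norm_nonneg (ρ 0 1), norm_nonneg (ρ 1 0)]

/-- The l₁-norm of coherence of a qubit state never increases under a
non-coherence-generating qubit channel. -/
theorem Cl1_monotone_under_qubit_NC (N : ℕ)
    (K : Fin N → Matrix (Fin 2) (Fin 2) ℂ)
    (hKraus : ∑ i, (K i)ᴴ * K i = 1)
    (hNC : ∀ σ : Matrix (Fin 2) (Fin 2) ℂ,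
      IsDensityMatrix σ → σ.IsDiag → (krausApply K σ).IsDiag)
    (ρ : Matrix (Fin 2) (Fin 2) ℂ) (hρ : IsDensityMatrix ρ) :
    Cl1 (krausApply K ρ) ≤ Cl1 ρ :=
  Cl1_monotone_under_qubit_NC_general N K hKraus hNC ρ
end

section
/- Let v₁ = (1/√2)(sin(π/8)|00⟩ + cos(π/8)|01⟩ + cos(π/8)|10⟩ - sin(π/8)|11⟩) and v₂ = (1/√2)(cos(π/8)|00⟩ - sin(π/8)|01⟩ + sin(π/8)|10⟩ + cos(π/8)|11⟩). For any real θ, φ, let ψ = cosθ·v₁ + sinθ·e^{iφ}·v₂, and set a₊ = |cosθ sin(π/8) + sinθ cos(π/8) e^{iφ}|², a₋ = |cosθ sin(π/8) - sinθ cos(π/8) e^{iφ}|². Then the base-2 Shannon entropy of the squared moduli of the four components of ψ in the product basis equals 1 + (1/2)h(a₊) + (1/2)h(a₋), and this quantity is strictly greater than 1. -/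
/-!
Write `a = cos θ`, `b = sin θ e^{iφ}`, `s = sin (π/8)`, `c = cos (π/8)`. The components of `ψ` are
`(a s + b c)/√2`, `(a c - b s)/√2`, `(a c + b s)/√2` and `-(a s - b c)/√2`; since `(s, c)` is a
rotation and `|a|² + |b|² = 1`, their squared moduli are `a₊/2`, `(1 - a₊)/2`, `(1 - a₋)/2`, `a₋/2`,
whose entropy is `1 + h(a₊)/2 + h(a₋)/2`. The excess over `1` vanishes only if `a₊, a₋ ∈ {0, 1}`,
which is impossible: by the parallelogram law `a₊ + a₋ = 2(s²|a|² + c²|b|²)` lies strictly between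
`0` and `2`, and by Cauchy–Schwarz `|a₊ - a₋| ≤ 4 s c |a| |b| ≤ sin (π/4) < 1`.
-/

open Matrix BigOperators Kronecker ComplexOrder

/-- Binary entropy function (base 2). -/
noncomputable def binEnt (x : ℝ) : ℝ :=
  -x * Real.logb 2 x - (1 - x) * Real.logb 2 (1 - x)

/-- `v₁ = (1/√2)(sin(π/8)|00⟩ + cos(π/8)|01⟩ + cos(π/8)|10⟩ - sin(π/8)|11⟩)`. -/
noncomputable def v1ex : Fin 2 × Fin 2 → ℂ := fun p =>
  (Real.sqrt 2 : ℂ)⁻¹ *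
    !![(Real.sin (Real.pi / 8) : ℂ), (Real.cos (Real.pi / 8) : ℂ);
       (Real.cos (Real.pi / 8) : ℂ), -(Real.sin (Real.pi / 8) : ℂ)] p.1 p.2

/-- `v₂ = (1/√2)(cos(π/8)|00⟩ - sin(π/8)|01⟩ + sin(π/8)|10⟩ + cos(π/8)|11⟩)`. -/
noncomputable def v2ex : Fin 2 × Fin 2 → ℂ := fun p =>
  (Real.sqrt 2 : ℂ)⁻¹ *
    !![(Real.cos (Real.pi / 8) : ℂ), -(Real.sin (Real.pi / 8) : ℂ);
       (Real.sin (Real.pi / 8) : ℂ), (Real.cos (Real.pi / 8) : ℂ)] p.1 p.2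

lemma neg_div_two_mul_logb_div_two (t : ℝ) :
    -(t / 2 * Real.logb 2 (t / 2)) = t / 2 - t / 2 * Real.logb 2 t := by
  rcases eq_or_ne t 0 with rfl | ht
  · simp
  · rw [Real.logb_div ht two_ne_zero, Real.logb_self_eq_one one_lt_two]
    ring

theorem shannon2_eq_of_halves {f : Fin 2 × Fin 2 → ℝ} {p q : ℝ} (h00 : f (0, 0) = p / 2)
    (h01 : f (0, 1) = (1 - p) / 2) (h10 : f (1, 0) = (1 - q) / 2) (h11 : f (1, 1) = q / 2) :
    shannon2 f = 1 + binEnt p / 2 + binEnt q / 2 := by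
  have := neg_div_two_mul_logb_div_two p
  have := neg_div_two_mul_logb_div_two (1 - p)
  have := neg_div_two_mul_logb_div_two q
  have := neg_div_two_mul_logb_div_two (1 - q)
  simp only [shannon2, Fintype.sum_prod_type, Fin.sum_univ_two, h00, h01, h10, h11, binEnt]
  linarith

lemma binEnt_eq_binEntropy_div_log_two (x : ℝ) : binEnt x = Real.binEntropy x / Real.log 2 := by
  simp only [binEnt, Real.binEntropy, Real.logb, Real.log_inv]
  ring

lemma binEnt_nonneg {x : ℝ} (h0 : 0 ≤ x) (h1 : x ≤ 1) : 0 ≤ binEnt x := by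
  rw [binEnt_eq_binEntropy_div_log_two]
  exact div_nonneg (Real.binEntropy_nonneg h0 h1) (Real.log_nonneg one_le_two)

lemma binEnt_pos {x : ℝ} (h0 : 0 < x) (h1 : x < 1) : 0 < binEnt x := by
  rw [binEnt_eq_binEntropy_div_log_two]
  exact div_pos (Real.binEntropy_pos h0 h1) (Real.log_pos one_lt_two)

theorem binEnt_add_binEnt_pos {p q : ℝ} (hp0 : 0 ≤ p) (hp1 : p ≤ 1) (hq0 : 0 ≤ q) (hq1 : q ≤ 1)
    (hsum0 : 0 < p + q) (hsum2 : p + q < 2) (hdiff : |p - q| < 1) :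
    0 < binEnt p + binEnt q := by
  rw [abs_lt] at hdiff
  have hq_pos : 0 < q → q < 1 → 0 < binEnt p + binEnt q := fun h0 h1 ↦ by
    linarith [binEnt_pos h0 h1, binEnt_nonneg hp0 hp1]
  rcases hp0.eq_or_lt with rfl | hp0'
  · exact hq_pos (by linarith) (by linarith)
  rcases hp1.eq_or_lt with rfl | hp1'
  · exact hq_pos (by linarith) (by linarith)
  linarith [binEnt_pos hp0' hp1', binEnt_nonneg hq0 hq1]

lemma norm_sq_mul_sub_add_norm_sq_mul_add (z w : ℂ) {s c : ℝ} (hsc : s ^ 2 + c ^ 2 = 1) :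
    ‖z * c - w * s‖ ^ 2 + ‖z * s + w * c‖ ^ 2 = ‖z‖ ^ 2 + ‖w‖ ^ 2 := by
  simp only [Complex.sq_norm, Complex.normSq_apply, Complex.sub_re, Complex.sub_im,
    Complex.add_re, Complex.add_im, Complex.mul_re, Complex.mul_im, Complex.ofReal_re,
    Complex.ofReal_im]
  linear_combination (z.re ^ 2 + z.im ^ 2 + w.re ^ 2 + w.im ^ 2) * hsc

lemma norm_sq_mul_add_add_norm_sq_mul_sub (z w : ℂ) {s c : ℝ} (hsc : s ^ 2 + c ^ 2 = 1) :
    ‖z * c + w * s‖ ^ 2 + ‖z * s - w * c‖ ^ 2 = ‖z‖ ^ 2 + ‖w‖ ^ 2 := by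
  simpa only [neg_mul, sub_neg_eq_add, ← sub_eq_add_neg, norm_neg] using
    norm_sq_mul_sub_add_norm_sq_mul_add z (-w) hsc

lemma abs_norm_add_sq_sub_norm_sub_sq_le {F : Type*} [NormedAddCommGroup F]
    [InnerProductSpace ℝ F] (x y : F) : |‖x + y‖ ^ 2 - ‖x - y‖ ^ 2| ≤ 4 * (‖x‖ * ‖y‖) := by
  have h : ‖x + y‖ ^ 2 - ‖x - y‖ ^ 2 = 4 * inner ℝ x y := by
    rw [norm_add_sq_real, norm_sub_sq_real]
    ring
  rw [h, abs_mul, abs_of_pos four_pos]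
  exact mul_le_mul_of_nonneg_left (abs_real_inner_le_norm x y) zero_le_four

lemma norm_sq_inv_sqrt_two_mul (u : ℂ) : ‖(Real.sqrt 2 : ℂ)⁻¹ * u‖ ^ 2 = ‖u‖ ^ 2 / 2 := by
  rw [norm_mul, norm_inv, Complex.norm_real, Real.norm_of_nonneg (Real.sqrt_nonneg 2), mul_pow,
    inv_pow, Real.sq_sqrt zero_le_two]
  ring

lemma norm_sq_mul_v1ex_add_mul_v2ex (a b : ℂ) :
    ‖a * v1ex (0, 0) + b * v2ex (0, 0)‖ ^ 2 =
        ‖a * Real.sin (Real.pi / 8) + b * Real.cos (Real.pi / 8)‖ ^ 2 / 2 ∧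
      ‖a * v1ex (0, 1) + b * v2ex (0, 1)‖ ^ 2 =
        ‖a * Real.cos (Real.pi / 8) - b * Real.sin (Real.pi / 8)‖ ^ 2 / 2 ∧
      ‖a * v1ex (1, 0) + b * v2ex (1, 0)‖ ^ 2 =
        ‖a * Real.cos (Real.pi / 8) + b * Real.sin (Real.pi / 8)‖ ^ 2 / 2 ∧
      ‖a * v1ex (1, 1) + b * v2ex (1, 1)‖ ^ 2 =
        ‖a * Real.sin (Real.pi / 8) - b * Real.cos (Real.pi / 8)‖ ^ 2 / 2 := by
  simp only [v1ex, v2ex, Matrix.of_apply, Matrix.cons_val', Matrix.cons_val_zero,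
    Matrix.cons_val_one, Matrix.empty_val', Matrix.cons_val_fin_one]
  rw [← norm_sub_rev (b * (Real.cos (Real.pi / 8) : ℂ)), ← norm_sq_inv_sqrt_two_mul,
    ← norm_sq_inv_sqrt_two_mul, ← norm_sq_inv_sqrt_two_mul, ← norm_sq_inv_sqrt_two_mul]
  refine ⟨?_, ?_, ?_, ?_⟩ <;> congr 2 <;> ring

lemma two_mul_sin_mul_cos_pi_div_eight_lt_one :
    2 * Real.sin (Real.pi / 8) * Real.cos (Real.pi / 8) < 1 := by
  rw [← Real.sin_two_mul, show 2 * (Real.pi / 8) = Real.pi / 4 by ring, Real.sin_pi_div_four]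
  nlinarith [Real.sq_sqrt (zero_le_two (α := ℝ)), Real.sqrt_nonneg 2]

theorem binEnt_norm_sq_add_binEnt_norm_sq_sub_pos {a b : ℂ} {s c : ℝ}
    (hab : ‖a‖ ^ 2 + ‖b‖ ^ 2 = 1) (hs : 0 < s) (hc : 0 < c) (hsc : s ^ 2 + c ^ 2 = 1)
    (hsc1 : 2 * s * c < 1) :
    0 < binEnt (‖a * s + b * c‖ ^ 2) + binEnt (‖a * s - b * c‖ ^ 2) := by
  have hp1 : ‖a * s + b * c‖ ^ 2 ≤ 1 := by
    linarith [norm_sq_mul_sub_add_norm_sq_mul_add a b hsc, sq_nonneg ‖a * c - b * s‖]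
  have hq1 : ‖a * s - b * c‖ ^ 2 ≤ 1 := by
    linarith [norm_sq_mul_add_add_norm_sq_mul_sub a b hsc, sq_nonneg ‖a * c + b * s‖]
  have hnorm_as : ‖a * s‖ = s * ‖a‖ := by
    rw [norm_mul, Complex.norm_real, Real.norm_of_nonneg hs.le, mul_comm]
  have hnorm_bc : ‖b * c‖ = c * ‖b‖ := by
    rw [norm_mul, Complex.norm_real, Real.norm_of_nonneg hc.le, mul_comm]
  have hsum : ‖a * s + b * c‖ ^ 2 + ‖a * s - b * c‖ ^ 2 =
      2 * (s ^ 2 * ‖a‖ ^ 2 + c ^ 2 * ‖b‖ ^ 2) := by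
    rw [parallelogram_law_with_norm ℝ, hnorm_as, hnorm_bc]
    ring
  have hdiff := abs_norm_add_sq_sub_norm_sub_sq_le (a * s) (b * c)
  rw [hnorm_as, hnorm_bc] at hdiff
  have hab2 : 2 * (‖a‖ * ‖b‖) ≤ 1 := by nlinarith [sq_nonneg (‖a‖ - ‖b‖)]
  apply binEnt_add_binEnt_pos (by positivity) hp1 (by positivity) hq1
  · rw [hsum]
    nlinarith [mul_pos (pow_pos hs 2) (pow_pos hc 2), mul_nonneg (pow_pos hs 2).le (sq_nonneg ‖a‖),
      mul_nonneg (pow_pos hc 2).le (sq_nonneg ‖b‖), sq_nonneg ‖a‖, sq_nonneg ‖b‖]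
  · rw [hsum]
    nlinarith [mul_pos (pow_pos hs 2) (pow_pos hc 2), mul_nonneg (pow_pos hs 2).le (sq_nonneg ‖b‖),
      mul_nonneg (pow_pos hc 2).le (sq_nonneg ‖a‖), sq_nonneg ‖a‖, sq_nonneg ‖b‖]
  · refine hdiff.trans_lt ?_
    nlinarith [mul_pos hs hc, norm_nonneg a, norm_nonneg b]

/-- For `ψ = cos θ · v₁ + sin θ · e^{iφ} · v₂`, the base-2 Shannon entropy of the squared
moduli of its four product-basis components equals `1 + h(a₊)/2 + h(a₋)/2 > 1`. -/
theorem component_entropy_exceeds_one (θ φ : ℝ) :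
    (shannon2 (fun j : Fin 2 × Fin 2 =>
        ‖(Real.cos θ : ℂ) * v1ex j +
          (Real.sin θ : ℂ) * Complex.exp ((φ : ℂ) * Complex.I) * v2ex j‖ ^ 2) =
      1 + binEnt (‖(Real.cos θ : ℂ) * (Real.sin (Real.pi / 8) : ℂ) +
          (Real.sin θ : ℂ) * (Real.cos (Real.pi / 8) : ℂ) *
            Complex.exp ((φ : ℂ) * Complex.I)‖ ^ 2) / 2 +
        binEnt (‖(Real.cos θ : ℂ) * (Real.sin (Real.pi / 8) : ℂ) -
          (Real.sin θ : ℂ) * (Real.cos (Real.pi / 8) : ℂ) *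
            Complex.exp ((φ : ℂ) * Complex.I)‖ ^ 2) / 2) ∧
    1 < shannon2 (fun j : Fin 2 × Fin 2 =>
        ‖(Real.cos θ : ℂ) * v1ex j +
          (Real.sin θ : ℂ) * Complex.exp ((φ : ℂ) * Complex.I) * v2ex j‖ ^ 2) := by
  set a : ℂ := (Real.cos θ : ℂ)
  set b : ℂ := (Real.sin θ : ℂ) * Complex.exp ((φ : ℂ) * Complex.I) with hb
  have hab : ‖a‖ ^ 2 + ‖b‖ ^ 2 = 1 := by
    rw [hb, norm_mul, Complex.norm_exp_ofReal_mul_I, Complex.norm_real, Complex.norm_real,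
      Real.norm_eq_abs, Real.norm_eq_abs, mul_one, sq_abs, sq_abs, Real.cos_sq_add_sin_sq]
  have hsc : Real.sin (Real.pi / 8) ^ 2 + Real.cos (Real.pi / 8) ^ 2 = 1 := Real.sin_sq_add_cos_sq _
  rw [mul_right_comm _ (Real.cos (Real.pi / 8) : ℂ), ← hb]
  obtain ⟨h00, h01, h10, h11⟩ := norm_sq_mul_v1ex_add_mul_v2ex a b
  have hent := shannon2_eq_of_halves (f := fun j => ‖a * v1ex j + b * v2ex j‖ ^ 2) h00
    (by rw [h01, ← hab, ← norm_sq_mul_sub_add_norm_sq_mul_add a b hsc]; ring)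
    (by rw [h10, ← hab, ← norm_sq_mul_add_add_norm_sq_mul_sub a b hsc]; ring) h11
  refine ⟨hent, ?_⟩
  have hpos := binEnt_norm_sq_add_binEnt_norm_sq_sub_pos hab
    (Real.sin_pos_of_pos_of_lt_pi (by positivity) (by linarith [Real.pi_pos]))
    (Real.cos_pos_of_mem_Ioo ⟨by linarith [Real.pi_pos], by linarith [Real.pi_pos]⟩)
    hsc two_mul_sin_mul_cos_pi_div_eight_lt_one
  rw [hent]
  linarith
end
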